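/- Let Λ be a finitely aligned k-graph and K ⊆ Λ^0 a nonempty set of vertices such that (1) for every u ∈ K and every finite exhaustive set E ⊆ uΛ there exists α ∈ E with s(α) ∈ K, and (2) if u ∈ K and vΛu ≠ ∅ then v ∈ K. Then there exists a boundary path x ∈ ∂Λ such that x(n) ∈ K for every n ≤ d(x). -/

import Mathlib

/-- A `k`-graph: a countable category `Λ` with a degree functor `d : Λ → ℕ^k`
satisfying the factorisation property. Morphisms form the type `Mor`,
objects (vertices) the type `Obj`. -/
structure KGraph (k : ℕ) where
  Obj : Type
  Mor : Type
  countableObj : Countable Obj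
  countableMor : Countable Mor
  r : Mor → Obj
  s : Mor → Obj
  d : Mor → (Fin k → ℕ)
  id : Obj → Mor
  comp : ∀ μ ν : Mor, s μ = r ν → Mor
  r_id : ∀ v, r (id v) = v
  s_id : ∀ v, s (id v) = v
  d_id : ∀ v, d (id v) = 0
  r_comp : ∀ μ ν h, r (comp μ ν h) = r μ
  s_comp : ∀ μ ν h, s (comp μ ν h) = s ν
  d_comp : ∀ μ ν h, d (comp μ ν h) = d μ + d ν
  id_comp : ∀ μ : Mor, comp (id (r μ)) μ (s_id (r μ)) = μ
  comp_id : ∀ μ : Mor, comp μ (id (s μ)) ((r_id (s μ)).symm) = μ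
  assoc : ∀ (μ ν ρ : Mor) (h₁ : s μ = r ν) (h₂ : s ν = r ρ),
    comp (comp μ ν h₁) ρ ((s_comp μ ν h₁).trans h₂)
      = comp μ (comp ν ρ h₂) (h₁.trans (r_comp ν ρ h₂).symm)
  factor : ∀ (lam : Mor) (m n : Fin k → ℕ), d lam = m + n →
    ∃! p : {q : Mor × Mor // s q.1 = r q.2},
      d p.val.1 = m ∧ d p.val.2 = n ∧ lam = comp p.val.1 p.val.2 p.property

namespace KGraph

variable {k : ℕ} (Λ : KGraph k)

/-- `μ` is an initial segment of `lam`, i.e. `lam = μρ` for some `ρ`. -/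
def InitSeg (μ lam : Λ.Mor) : Prop :=
  ∃ (ρ : Λ.Mor) (h : Λ.s μ = Λ.r ρ), lam = Λ.comp μ ρ h

/-- The set of minimal common extensions of `μ` and `ν`. -/
def MCE (μ ν : Λ.Mor) : Set Λ.Mor :=
  {lam | Λ.d lam = Λ.d μ ⊔ Λ.d ν ∧ Λ.InitSeg μ lam ∧ Λ.InitSeg ν lam}

/-- `Λ` is finitely aligned if all `MCE` sets are finite. -/
def FinitelyAligned : Prop := ∀ μ ν : Λ.Mor, (Λ.MCE μ ν).Finite

/-- Aperiodicity: distinct paths with the same source admit a common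
extension `τ` with `MCE (ατ, βτ) = ∅`. -/
def Aperiodic : Prop :=
  ∀ α β : Λ.Mor, α ≠ β → Λ.s α = Λ.s β →
    ∃ (τ : Λ.Mor) (hα : Λ.s α = Λ.r τ) (hβ : Λ.s β = Λ.r τ),
      Λ.MCE (Λ.comp α τ hα) (Λ.comp β τ hβ) = ∅

/-- `E` is a finite exhaustive subset of `vΛ`. -/
def IsFE (v : Λ.Obj) (E : Set Λ.Mor) : Prop :=
  E.Finite ∧ (∀ α ∈ E, Λ.r α = v) ∧
    ∀ μ : Λ.Mor, Λ.r μ = v → ∃ lam ∈ E, (Λ.MCE μ lam).Nonempty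

/-- The segment `lam(p,q)` of a path `lam`, for `p ≤ q ≤ d lam`,
obtained from the factorisation property. -/
noncomputable def seg (lam : Λ.Mor) (p q : Fin k → ℕ) (hpq : p ≤ q) (hq : q ≤ Λ.d lam) :
    Λ.Mor := by
  have h1 : Λ.d lam = p + (Λ.d lam - p) := by
    funext i; exact (Nat.add_sub_cancel' ((hpq.trans hq) i)).symm
  have hspec := (Λ.factor lam p (Λ.d lam - p) h1).exists.choose_spec
  refine (Λ.factor ((Λ.factor lam p (Λ.d lam - p) h1).exists.choose).val.2
      (q - p) (Λ.d lam - q) ?_).exists.choose.val.1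
  rw [hspec.2.1]
  funext i
  have h3 : p i ≤ q i := hpq i
  have h4 : q i ≤ Λ.d lam i := hq i
  simp only [Pi.sub_apply, Pi.add_apply]
  omega

/-- A (possibly infinite) path in `Λ`: a degree-preserving functor from
`Ω_{k,m}` (for `m = deg ∈ (ℕ ∪ {∞})^k`) to `Λ`, recorded by its segments. -/
structure InfPath (Λ : KGraph k) where
  deg : Fin k → ℕ∞
  seg : ∀ p q : Fin k → ℕ, p ≤ q → (∀ i, (q i : ℕ∞) ≤ deg i) → Λ.Mor
  d_seg : ∀ p q hpq hq, Λ.d (seg p q hpq hq) = q - p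
  comp_seg : ∀ (p q r : Fin k → ℕ) (hpq : p ≤ q) (hqr : q ≤ r)
      (hq : ∀ i, (q i : ℕ∞) ≤ deg i) (hr : ∀ i, (r i : ℕ∞) ≤ deg i),
    ∃ h : Λ.s (seg p q hpq hq) = Λ.r (seg q r hqr hr),
      Λ.comp (seg p q hpq hq) (seg q r hqr hr) h = seg p r (hpq.trans hqr) hr

/-- The vertex `x(n)` of an infinite path. -/
def InfPath.vert {Λ : KGraph k} (x : Λ.InfPath) (n : Fin k → ℕ) (hn : ∀ i, (n i : ℕ∞) ≤ x.deg i) : Λ.Obj :=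
  Λ.r (x.seg n n le_rfl hn)

/-- The range `r(x) = x(0)` of an infinite path. -/
def InfPath.rng {Λ : KGraph k} (x : Λ.InfPath) : Λ.Obj :=
  Λ.r (x.seg 0 0 le_rfl (fun i => by simp))

/-- `x` is a boundary path: it hits every finite exhaustive set. -/
def IsBoundary (x : Λ.InfPath) : Prop :=
  ∀ (n : Fin k → ℕ) (hn : ∀ i, (n i : ℕ∞) ≤ x.deg i) (E : Set Λ.Mor),
    Λ.IsFE (x.vert n hn) E →
    ∃ (p : Fin k → ℕ) (hp : ∀ i, ((n + p) i : ℕ∞) ≤ x.deg i),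
      x.seg n (n + p) le_self_add hp ∈ E

/-- The set of boundary paths with range `v` is `v∂Λ`. -/

private lemma enat_aux {a b : ℕ} {D : ℕ∞} (h2 : (a : ℕ∞) ≤ D) (h1 : (b : ℕ∞) ≤ D - a) :
    ((a + b : ℕ) : ℕ∞) ≤ D := by
  cases D with
  | top => exact le_top
  | coe dN =>
    have ha : a ≤ dN := by exact_mod_cast h2
    rw [← ENat.coe_sub] at h1
    have hb : b ≤ dN - a := by exact_mod_cast h1
    exact_mod_cast (by omega : a + b ≤ dN)

/-- The shifted path `σ^m(x)`. -/
def InfPath.shift {Λ : KGraph k} (x : Λ.InfPath) (m : Fin k → ℕ) (hm : ∀ i, (m i : ℕ∞) ≤ x.deg i) :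
    Λ.InfPath where
  deg := fun i => x.deg i - (m i : ℕ∞)
  seg := fun p q hpq hq => x.seg (m + p) (m + q) (add_le_add_right hpq m)
    (fun i => by
      have := enat_aux (hm i) (hq i)
      simpa using this)
  d_seg := fun p q hpq hq => by
    rw [x.d_seg]
    funext i
    simp only [Pi.sub_apply, Pi.add_apply]
    omega
  comp_seg := fun p q r hpq hqr hq hr =>
    x.comp_seg (m + p) (m + q) (m + r) (add_le_add_right hpq m) (add_le_add_right hqr m) _ _

/-- `w = lam · z` : the path `w` extends `z` by the finite path `lam`,
i.e. `w(0, d lam) = lam` and `σ^{d lam}(w) = z`. -/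
def InfPath.ExtendsBy {Λ : KGraph k} (w z : Λ.InfPath) (lam : Λ.Mor) : Prop :=
  ∃ h : ∀ i, ((Λ.d lam) i : ℕ∞) ≤ w.deg i,
    w.seg 0 (Λ.d lam) zero_le h = lam ∧ w.shift (Λ.d lam) h = z

/-- Local periodicity `m, n` at `v`. -/
def LocalPeriodicity (m n : Fin k → ℕ) (v : Λ.Obj) : Prop :=
  ∀ x : Λ.InfPath, Λ.IsBoundary x → x.rng = v →
    (∀ i, (((m ⊔ n) i : ℕ) : ℕ∞) ≤ x.deg i) ∧
    ∃ (hm : ∀ i, (m i : ℕ∞) ≤ x.deg i) (hn : ∀ i, (n i : ℕ∞) ≤ x.deg i),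
      x.shift m hm = x.shift n hn

/-- Cofinality of `Λ`, stated in terms of finite paths. -/
def Cofinal : Prop :=
  ∀ v w : Λ.Obj, ∃ E : Set Λ.Mor, Λ.IsFE w E ∧
    ∀ α ∈ E, ∃ lam : Λ.Mor, Λ.r lam = v ∧ Λ.s lam = Λ.s α


/-!
Enumerate all pairs `(n, E)` of a degree and a finite set of paths, each pair recurring
infinitely often. Starting at a vertex of `K`, build an increasing chain of finite paths
`λ₀ ≤ λ₁ ≤ ⋯` with sources in `K`: at stage `j`, if `E = E_j` is exhaustive at `λ_j(n_j)`, then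
`Ext(λ_j(n_j, d λ_j); E)` is finite exhaustive at `s(λ_j) ∈ K` (finite alignment), so hypothesis
`h1` extends `λ_j` by some `ρ` with `s ρ ∈ K`, and `λ_j ρ` passes through `E` at `n_j`. The union
of the chain is a boundary path, since every `E` exhaustive at one of its vertices is met at a
later stage; its vertices are ranges of paths with source in `K`, hence lie in `K` by `h2`.
-/

section Factorisation

variable {k : ℕ} {Λ : KGraph k}

lemma d_le_d_comp {a b : Λ.Mor} (h : Λ.s a = Λ.r b) : Λ.d a ≤ Λ.d (Λ.comp a b h) := by
  rw [Λ.d_comp]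
  exact le_self_add

/-- A factorisation `lam = lam(0, m) lam(m, d lam)`; `head` and `tail` are its two factors. -/
noncomputable def factorAt (lam : Λ.Mor) (m : Fin k → ℕ) (hm : m ≤ Λ.d lam) :
    {q : Λ.Mor × Λ.Mor // Λ.s q.1 = Λ.r q.2} :=
  (Λ.factor lam m (Λ.d lam - m) (add_tsub_cancel_of_le hm).symm).exists.choose

noncomputable def head (lam : Λ.Mor) (m : Fin k → ℕ) (hm : m ≤ Λ.d lam) : Λ.Mor :=
  (factorAt lam m hm).1.1

noncomputable def tail (lam : Λ.Mor) (m : Fin k → ℕ) (hm : m ≤ Λ.d lam) : Λ.Mor :=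
  (factorAt lam m hm).1.2

section

variable (lam : Λ.Mor) (m : Fin k → ℕ) (hm : m ≤ Λ.d lam)

lemma factorAt_spec :
    Λ.d (head lam m hm) = m ∧ Λ.d (tail lam m hm) = Λ.d lam - m ∧
      lam = Λ.comp (head lam m hm) (tail lam m hm) (factorAt lam m hm).2 :=
  (Λ.factor lam m (Λ.d lam - m) (add_tsub_cancel_of_le hm).symm).exists.choose_spec

lemma d_head : Λ.d (head lam m hm) = m := (factorAt_spec lam m hm).1

lemma d_tail : Λ.d (tail lam m hm) = Λ.d lam - m := (factorAt_spec lam m hm).2.1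

lemma s_head : Λ.s (head lam m hm) = Λ.r (tail lam m hm) := (factorAt lam m hm).2

lemma head_comp_tail : Λ.comp (head lam m hm) (tail lam m hm) (s_head lam m hm) = lam :=
  (factorAt_spec lam m hm).2.2.symm

lemma r_head : Λ.r (head lam m hm) = Λ.r lam := by
  conv_rhs => rw [← head_comp_tail lam m hm]
  rw [Λ.r_comp]

lemma s_tail : Λ.s (tail lam m hm) = Λ.s lam := by
  conv_rhs => rw [← head_comp_tail lam m hm]
  rw [Λ.s_comp]

end

variable {lam : Λ.Mor} {m : Fin k → ℕ}

lemma head_tail_unique (hm : m ≤ Λ.d lam) {a b : Λ.Mor} (h : Λ.s a = Λ.r b)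
    (hab : Λ.comp a b h = lam) (ha : Λ.d a = m) : head lam m hm = a ∧ tail lam m hm = b := by
  have hb : Λ.d b = Λ.d lam - m := by
    rw [← hab, Λ.d_comp, ha, add_tsub_cancel_left]
  have := (Λ.factor lam m (Λ.d lam - m) (add_tsub_cancel_of_le hm).symm).unique
    (y₁ := factorAt lam m hm) (y₂ := ⟨(a, b), h⟩) (factorAt_spec lam m hm) ⟨ha, hb, hab.symm⟩
  exact ⟨congrArg (·.1.1) this, congrArg (·.1.2) this⟩

lemma head_congr {lam' : Λ.Mor} {m' : Fin k → ℕ} (e : lam = lam') (em : m = m')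
    (hm : m ≤ Λ.d lam) (hm' : m' ≤ Λ.d lam') : head lam m hm = head lam' m' hm' := by
  subst e em; rfl

lemma comp_left_cancel {μ a b : Λ.Mor} (ha : Λ.s μ = Λ.r a) (hb : Λ.s μ = Λ.r b)
    (e : Λ.comp μ a ha = Λ.comp μ b hb) : a = b := by
  have hμ := d_le_d_comp ha
  rw [← (head_tail_unique hμ ha rfl rfl).2, ← (head_tail_unique hμ hb e.symm rfl).2]

lemma head_tail_comp_of_le {a b : Λ.Mor} (h : Λ.s a = Λ.r b) (hm : m ≤ Λ.d a) :
    head (Λ.comp a b h) m (hm.trans (d_le_d_comp h)) = head a m hm ∧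
      tail (Λ.comp a b h) m (hm.trans (d_le_d_comp h)) =
        Λ.comp (tail a m hm) b ((s_tail a m hm).trans h) := by
  refine head_tail_unique _ ((s_head a m hm).trans (Λ.r_comp _ _ _).symm) ?_ (d_head a m hm)
  rw [← Λ.assoc]
  congr 1
  exact head_comp_tail a m hm

/-- `lam(0, m) lam(m, m') = lam(0, m')` and `lam(m, d lam)(m' - m, d lam - m) = lam(m', d lam)`. -/
lemma head_tail_of_le {m' : Fin k → ℕ} (hmm' : m ≤ m') (hm' : m' ≤ Λ.d lam) :
    Λ.comp (head lam m (hmm'.trans hm'))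
        (head (tail lam m (hmm'.trans hm')) (m' - m)
          (by rw [d_tail]; exact tsub_le_tsub_right hm' m))
        ((s_head _ _ _).trans (r_head _ _ _).symm) = head lam m' hm' ∧
      tail (tail lam m (hmm'.trans hm')) (m' - m)
          (by rw [d_tail]; exact tsub_le_tsub_right hm' m) = tail lam m' hm' := by
  have hm : m ≤ Λ.d lam := hmm'.trans hm'
  set t := tail lam m hm
  have hc : m' - m ≤ Λ.d t := by rw [d_tail]; exact tsub_le_tsub_right hm' m
  have e : Λ.comp (Λ.comp (head lam m hm) (head t (m' - m) hc)
      ((s_head _ _ _).trans (r_head _ _ _).symm)) (tail t (m' - m) hc)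
      ((Λ.s_comp _ _ _).trans (s_head t (m' - m) hc)) = lam := by
    rw [Λ.assoc]
    conv_rhs => rw [← head_comp_tail lam m hm]
    congr 1
    exact head_comp_tail t (m' - m) hc
  have key := head_tail_unique hm' _ e
    (by rw [Λ.d_comp, d_head lam, d_head t, add_tsub_cancel_of_le hmm'])
  exact ⟨key.1.symm, key.2.symm⟩

end Factorisation

section Segments

variable {k : ℕ} {Λ : KGraph k}

lemma initSeg_refl (lam : Λ.Mor) : Λ.InitSeg lam lam :=
  ⟨Λ.id (Λ.s lam), (Λ.r_id _).symm, (Λ.comp_id lam).symm⟩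

lemma initSeg_trans {a b c : Λ.Mor} (hab : Λ.InitSeg a b) (hbc : Λ.InitSeg b c) :
    Λ.InitSeg a c := by
  obtain ⟨ρ, hρ, rfl⟩ := hab
  obtain ⟨σ, hσ, rfl⟩ := hbc
  exact ⟨Λ.comp ρ σ ((Λ.s_comp _ _ _).symm.trans hσ), hρ.trans (Λ.r_comp _ _ _).symm,
    Λ.assoc _ _ _ _ _⟩

lemma initSeg_d_le {a b : Λ.Mor} (h : Λ.InitSeg a b) : Λ.d a ≤ Λ.d b := by
  obtain ⟨ρ, hρ, rfl⟩ := h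
  exact d_le_d_comp hρ

lemma head_initSeg (τ : Λ.Mor) (m : Fin k → ℕ) (hm : m ≤ Λ.d τ) : Λ.InitSeg (head τ m hm) τ :=
  ⟨tail τ m hm, s_head τ m hm, (head_comp_tail τ m hm).symm⟩

lemma initSeg_head {a τ : Λ.Mor} (h : Λ.InitSeg a τ) {m : Fin k → ℕ} (ham : Λ.d a ≤ m)
    (hm : m ≤ Λ.d τ) : Λ.InitSeg a (head τ m hm) := by
  obtain ⟨ρ, hρ, e⟩ := h
  rw [← (head_tail_unique (initSeg_d_le ⟨ρ, hρ, e⟩) hρ e.symm rfl).1]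
  exact ⟨_, _, (head_tail_of_le ham hm).1.symm⟩

lemma initSeg_tail {μ β τ : Λ.Mor} (h : Λ.s μ = Λ.r β) (hτ : Λ.InitSeg (Λ.comp μ β h) τ)
    (hμ : Λ.d μ ≤ Λ.d τ) : Λ.InitSeg β (tail τ (Λ.d μ) hμ) := by
  obtain ⟨γ, hγ, rfl⟩ := hτ
  exact ⟨γ, (Λ.s_comp _ _ _).symm.trans hγ,
    (head_tail_unique hμ _ (Λ.assoc _ _ _ _ _).symm rfl).2⟩

lemma head_sup_mem_MCE {a b τ : Λ.Mor} (ha : Λ.InitSeg a τ) (hb : Λ.InitSeg b τ) :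
    head τ (Λ.d a ⊔ Λ.d b) (sup_le (initSeg_d_le ha) (initSeg_d_le hb)) ∈ Λ.MCE a b :=
  ⟨d_head _ _ _, initSeg_head ha le_sup_left _, initSeg_head hb le_sup_right _⟩

/-- `KGraph.seg` factors `tail lam p` at `q - p` with a complement of degree `d lam - q` instead
of `d (tail lam p) - (q - p)`, so it agrees with `head` only by uniqueness of factorisations. -/
lemma seg_eq_head_tail (lam : Λ.Mor) {p q : Fin k → ℕ} (hpq : p ≤ q) (hq : q ≤ Λ.d lam) :
    Λ.seg lam p q hpq hq =
      head (tail lam p (hpq.trans hq)) (q - p) (by rw [d_tail]; exact tsub_le_tsub_right hq p) := by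
  obtain ⟨hd, -, he⟩ := (Λ.factor (tail lam p (hpq.trans hq)) (q - p) (Λ.d lam - q) (by
    rw [d_tail, ← tsub_add_tsub_cancel hq hpq, add_comm])).exists.choose_spec
  exact (head_tail_unique _ _ he.symm hd).1.symm

lemma d_seg (lam : Λ.Mor) {p q : Fin k → ℕ} (hpq : p ≤ q) (hq : q ≤ Λ.d lam) :
    Λ.d (Λ.seg lam p q hpq hq) = q - p := by
  rw [seg_eq_head_tail, d_head]

lemma r_seg_self (lam : Λ.Mor) {n : Fin k → ℕ} (hn : n ≤ Λ.d lam) :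
    Λ.r (Λ.seg lam n n le_rfl hn) = Λ.r (tail lam n hn) := by
  rw [seg_eq_head_tail, r_head]

lemma seg_comp_seg (lam : Λ.Mor) {p q r : Fin k → ℕ} (hpq : p ≤ q) (hqr : q ≤ r)
    (hr : r ≤ Λ.d lam) :
    ∃ h : Λ.s (Λ.seg lam p q hpq (hqr.trans hr)) = Λ.r (Λ.seg lam q r hqr hr),
      Λ.comp (Λ.seg lam p q hpq (hqr.trans hr)) (Λ.seg lam q r hqr hr) h =
        Λ.seg lam p r (hpq.trans hqr) hr := by
  have hrt : r - p ≤ Λ.d (tail lam p (hpq.trans (hqr.trans hr))) := by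
    rw [d_tail]; exact tsub_le_tsub_right hr p
  have hsplit := (head_tail_of_le (tsub_le_tsub_right hqr p) hrt).1
  have hqr_seg : Λ.seg lam q r hqr hr =
      head (tail (tail lam p (hpq.trans (hqr.trans hr))) (q - p)
        (by rw [d_tail]; exact tsub_le_tsub_right (hqr.trans hr) p)) ((r - p) - (q - p))
      (by rw [d_tail, d_tail]; exact tsub_le_tsub_right (tsub_le_tsub_right hr p) _) := by
    rw [seg_eq_head_tail]
    exact head_congr (head_tail_of_le hpq (hqr.trans hr)).2.symm
      (tsub_tsub_tsub_cancel_right hpq).symm _ _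
  rw [hqr_seg, seg_eq_head_tail lam hpq, seg_eq_head_tail lam (hpq.trans hqr)]
  exact ⟨_, hsplit⟩

lemma seg_of_initSeg {a b : Λ.Mor} (h : Λ.InitSeg a b) {p q : Fin k → ℕ} (hpq : p ≤ q)
    (ha : q ≤ Λ.d a) (hb : q ≤ Λ.d b) : Λ.seg b p q hpq hb = Λ.seg a p q hpq ha := by
  obtain ⟨ρ, hρ, rfl⟩ := h
  rw [seg_eq_head_tail, seg_eq_head_tail]
  simp only [(head_tail_comp_of_le hρ (hpq.trans ha)).2]
  exact (head_tail_comp_of_le _ _).1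

lemma seg_eq_of_initSeg_tail {lam α : Λ.Mor} {n : Fin k → ℕ} (hn : n ≤ Λ.d lam)
    (h : Λ.InitSeg α (tail lam n hn)) :
    ∃ hd : n + Λ.d α ≤ Λ.d lam, Λ.seg lam n (n + Λ.d α) le_self_add hd = α := by
  have hα := initSeg_d_le h
  rw [d_tail] at hα
  obtain ⟨ρ, hρ, e⟩ := h
  refine ⟨(le_tsub_iff_left hn).1 hα, ?_⟩
  rw [seg_eq_head_tail]
  exact (head_tail_unique _ hρ e.symm (add_tsub_cancel_left n _).symm).1

end Segments

section Extension

variable {k : ℕ} {Λ : KGraph k}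

def Ext (μ : Λ.Mor) (E : Set Λ.Mor) : Set Λ.Mor :=
  {ρ | ∃ h : Λ.s μ = Λ.r ρ, ∃ α ∈ E, Λ.comp μ ρ h ∈ Λ.MCE μ α}

lemma isFE_ext (hFA : Λ.FinitelyAligned) {μ : Λ.Mor} {E : Set Λ.Mor}
    (hE : Λ.IsFE (Λ.r μ) E) : Λ.IsFE (Λ.s μ) (Ext μ E) := by
  refine ⟨?_, fun ρ ⟨h, _⟩ => h.symm, ?_⟩
  · have hsub : Ext μ E ⊆ ⋃ α ∈ E, ⋃ τ ∈ Λ.MCE μ α, {ρ | ∃ h, Λ.comp μ ρ h = τ} := by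
      rintro ρ ⟨h, α, hα, hτ⟩
      simp only [Set.mem_iUnion]
      exact ⟨α, hα, _, hτ, h, rfl⟩
    refine Set.Finite.subset (hE.1.biUnion fun α _ => (hFA μ α).biUnion fun τ _ => ?_) hsub
    refine Set.Subsingleton.finite ?_
    rintro ρ ⟨h, rfl⟩ ρ' ⟨h', e⟩
    exact comp_left_cancel h h' e.symm
  · intro ν hν
    obtain ⟨α, hα, τ, -, hμντ, hατ⟩ := hE.2.2 (Λ.comp μ ν hν.symm) (Λ.r_comp _ _ _)
    have hμτ : Λ.InitSeg μ τ := initSeg_trans ⟨ν, hν.symm, rfl⟩ hμντ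
    have hg := head_sup_mem_MCE hμτ hατ
    obtain ⟨ρ, hρ, eg⟩ := hg.2.1
    refine ⟨ρ, ⟨hρ, α, hα, eg ▸ hg⟩, ?_⟩
    -- `μρ = τ(0, d μ ∨ d α)`, so `ν` and `ρ` are both initial segments of `τ(d μ, d τ)`
    have hντ := initSeg_tail hν.symm hμντ (initSeg_d_le hμτ)
    have hρτ := initSeg_tail hρ (eg ▸ head_initSeg τ _ _) (initSeg_d_le hμτ)
    exact ⟨_, head_sup_mem_MCE hντ hρτ⟩

variable {K : Set Λ.Obj}

def PassesThrough (lam : Λ.Mor) (n : Fin k → ℕ) (E : Set Λ.Mor) : Prop :=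
  ∃ α ∈ E, ∃ hd : n + Λ.d α ≤ Λ.d lam, Λ.seg lam n (n + Λ.d α) le_self_add hd = α

lemma exists_comp_passesThrough (hFA : Λ.FinitelyAligned)
    (h1 : ∀ u ∈ K, ∀ E : Set Λ.Mor, Λ.IsFE u E → ∃ α ∈ E, Λ.s α ∈ K)
    {lam : Λ.Mor} (hlam : Λ.s lam ∈ K) {n : Fin k → ℕ} (hn : n ≤ Λ.d lam) {E : Set Λ.Mor}
    (hE : Λ.IsFE (Λ.r (tail lam n hn)) E) :
    ∃ (ρ : Λ.Mor) (h : Λ.s lam = Λ.r ρ), Λ.s ρ ∈ K ∧ PassesThrough (Λ.comp lam ρ h) n E := by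
  obtain ⟨ρ, ⟨hρ, α, hα, hmce⟩, hρK⟩ := h1 _ (by rwa [s_tail]) _ (isFE_ext hFA hE)
  have h : Λ.s lam = Λ.r ρ := (s_tail lam n hn).symm.trans hρ
  refine ⟨ρ, h, hρK, α, hα, seg_eq_of_initSeg_tail (hn.trans (d_le_d_comp h)) ?_⟩
  rw [(head_tail_comp_of_le h hn).2]
  exact hmce.2.2

lemma exists_step (hFA : Λ.FinitelyAligned)
    (h1 : ∀ u ∈ K, ∀ E : Set Λ.Mor, Λ.IsFE u E → ∃ α ∈ E, Λ.s α ∈ K)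
    (lam : Λ.Mor) (hlam : Λ.s lam ∈ K) (n : Fin k → ℕ) (E : Set Λ.Mor) :
    ∃ lam' : Λ.Mor, Λ.s lam' ∈ K ∧ Λ.InitSeg lam lam' ∧
      ∀ hn : n ≤ Λ.d lam, Λ.IsFE (Λ.r (tail lam n hn)) E → PassesThrough lam' n E := by
  by_cases hc : ∃ hn : n ≤ Λ.d lam, Λ.IsFE (Λ.r (tail lam n hn)) E
  · obtain ⟨hn, hE⟩ := hc
    obtain ⟨ρ, h, hρK, hpass⟩ := exists_comp_passesThrough hFA h1 hlam hn hE
    exact ⟨_, by rwa [Λ.s_comp], ⟨ρ, h, rfl⟩, fun _ _ => hpass⟩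
  · exact ⟨lam, hlam, initSeg_refl lam, fun hn hE => absurd ⟨hn, hE⟩ hc⟩

end Extension

lemma eventually_le_of_le_iSup {ι : Type*} [Finite ι] {D : ℕ → ι → ℕ} (hD : Monotone D)
    {q : ι → ℕ} (hq : ∀ i, (q i : ℕ∞) ≤ ⨆ j, (D j i : ℕ∞)) : ∀ᶠ j in Filter.atTop, q ≤ D j := by
  refine Filter.eventually_all.2 fun i => ?_
  obtain ⟨j₀, hj₀⟩ : ∃ j, q i ≤ D j i := by
    by_contra! hlt
    have hsup : ⨆ j, (D j i : ℕ∞) ≤ (q i - 1 : ℕ) :=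
      iSup_le fun j => by exact_mod_cast Nat.le_sub_one_of_lt (hlt j)
    have hle : q i ≤ q i - 1 := by exact_mod_cast (hq i).trans hsup
    have hpos := hlt 0
    omega
  exact Filter.eventually_atTop.2 ⟨j₀, fun j hj => hj₀.trans (hD hj i)⟩

lemma exists_seq_frequently_eq (α : Type*) [Countable α] [Nonempty α] :
    ∃ F : ℕ → α, ∀ a, ∃ᶠ j in Filter.atTop, F j = a := by
  obtain ⟨g, hg⟩ := exists_surjective_nat α
  refine ⟨fun j => g (Nat.unpair j).2, fun a => Filter.frequently_atTop.2 fun i => ?_⟩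
  obtain ⟨m, rfl⟩ := hg a
  exact ⟨Nat.pair i m, Nat.left_le_pair i m, by simp only [Nat.unpair_pair]⟩

section Chain

variable {k : ℕ} {Λ : KGraph k} {L : ℕ → Λ.Mor}

lemma initSeg_chain (hL : ∀ j, Λ.InitSeg (L j) (L (j + 1))) {a b : ℕ} (hab : a ≤ b) :
    Λ.InitSeg (L a) (L b) := by
  induction b, hab using Nat.le_induction with
  | base => exact initSeg_refl _
  | succ b _ ih => exact initSeg_trans ih (hL b)

lemma monotone_d_chain (hL : ∀ j, Λ.InitSeg (L j) (L (j + 1))) :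
    Monotone fun j => Λ.d (L j) :=
  fun _ _ hab => initSeg_d_le (initSeg_chain hL hab)

lemma exists_le_d_chain (hL : ∀ j, Λ.InitSeg (L j) (L (j + 1))) {q : Fin k → ℕ}
    (hq : ∀ i, (q i : ℕ∞) ≤ ⨆ j, (Λ.d (L j) i : ℕ∞)) : ∃ j, q ≤ Λ.d (L j) :=
  (eventually_le_of_le_iSup (monotone_d_chain hL) hq).exists

lemma seg_chain_eq (hL : ∀ j, Λ.InitSeg (L j) (L (j + 1))) {p q : Fin k → ℕ} (hpq : p ≤ q)
    {j j' : ℕ} (hj : q ≤ Λ.d (L j)) (hj' : q ≤ Λ.d (L j')) :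
    Λ.seg (L j) p q hpq hj = Λ.seg (L j') p q hpq hj' := by
  rcases le_total j j' with h | h
  · exact (seg_of_initSeg (initSeg_chain hL h) hpq hj hj').symm
  · exact seg_of_initSeg (initSeg_chain hL h) hpq hj' hj

noncomputable def InfPath.ofChain (hL : ∀ j, Λ.InitSeg (L j) (L (j + 1))) : Λ.InfPath where
  deg i := ⨆ j, (Λ.d (L j) i : ℕ∞)
  seg p q hpq hq :=
    Λ.seg (L (exists_le_d_chain hL hq).choose) p q hpq (exists_le_d_chain hL hq).choose_spec
  d_seg _ _ _ _ := KGraph.d_seg _ _ _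
  comp_seg p q r hpq hqr hq hr := by
    have hJ := (exists_le_d_chain hL hr).choose_spec
    rw [seg_chain_eq hL hpq (exists_le_d_chain hL hq).choose_spec (hqr.trans hJ),
      seg_chain_eq hL (hpq.trans hqr) hJ hJ]
    exact seg_comp_seg _ hpq hqr hJ

namespace InfPath

variable (hL : ∀ j, Λ.InitSeg (L j) (L (j + 1)))

lemma ofChain_seg {p q : Fin k → ℕ} (hpq : p ≤ q) (hq : ∀ i, (q i : ℕ∞) ≤ (ofChain hL).deg i)
    {j : ℕ} (hj : q ≤ Λ.d (L j)) : (ofChain hL).seg p q hpq hq = Λ.seg (L j) p q hpq hj :=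
  seg_chain_eq hL hpq (exists_le_d_chain hL hq).choose_spec hj

lemma le_ofChain_deg {q : Fin k → ℕ} {j : ℕ} (hj : q ≤ Λ.d (L j)) (i : Fin k) :
    (q i : ℕ∞) ≤ (ofChain hL).deg i :=
  le_iSup_of_le (f := fun j => (Λ.d (L j) i : ℕ∞)) j (by exact_mod_cast hj i)

lemma ofChain_vert {n : Fin k → ℕ} (hn : ∀ i, (n i : ℕ∞) ≤ (ofChain hL).deg i) {j : ℕ}
    (hj : n ≤ Λ.d (L j)) : (ofChain hL).vert n hn = Λ.r (tail (L j) n hj) := by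
  rw [vert, ofChain_seg hL le_rfl hn hj, r_seg_self]

lemma isBoundary_ofChain
    (hpass : ∀ (n : Fin k → ℕ) (E : Set Λ.Mor), E.Finite → ∃ᶠ j in Filter.atTop,
      ∀ hn : n ≤ Λ.d (L j), Λ.IsFE (Λ.r (tail (L j) n hn)) E → PassesThrough (L (j + 1)) n E) :
    Λ.IsBoundary (ofChain hL) := by
  intro n hn E hE
  obtain ⟨j, hpass_j, hj⟩ :=
    ((hpass n E hE.1).and_eventually (eventually_le_of_le_iSup (monotone_d_chain hL) hn)).exists
  rw [ofChain_vert hL hn hj] at hE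
  obtain ⟨α, hα, hd, hseg⟩ := hpass_j hj hE
  exact ⟨Λ.d α, le_ofChain_deg hL hd, by rw [ofChain_seg hL _ _ hd, hseg]; exact hα⟩

end InfPath

end Chain

section Construction

variable {k : ℕ} {Λ : KGraph k}

lemma exists_chain_passesThrough {K : Set Λ.Obj} (hFA : Λ.FinitelyAligned)
    (h1 : ∀ u ∈ K, ∀ E : Set Λ.Mor, Λ.IsFE u E → ∃ α ∈ E, Λ.s α ∈ K) (hne : K.Nonempty) :
    ∃ (L : ℕ → Λ.Mor) (_ : ∀ j, Λ.InitSeg (L j) (L (j + 1))), (∀ j, Λ.s (L j) ∈ K) ∧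
      ∀ (n : Fin k → ℕ) (E : Set Λ.Mor), E.Finite → ∃ᶠ j in Filter.atTop,
        ∀ hn : n ≤ Λ.d (L j), Λ.IsFE (Λ.r (tail (L j) n hn)) E → PassesThrough (L (j + 1)) n E := by
  obtain ⟨v, hv⟩ := hne
  have := Λ.countableMor
  obtain ⟨F, hF⟩ := exists_seq_frequently_eq ((Fin k → ℕ) × Finset Λ.Mor)
  choose step hstepK hstep_init hstep_pass using exists_step hFA h1
  -- stage `j` treats the pair `F j`; every pair recurs infinitely often
  let L : ℕ → {μ : Λ.Mor // Λ.s μ ∈ K} := fun j => Nat.rec (motive := fun _ => _)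
    ⟨Λ.id v, by rwa [Λ.s_id]⟩ (fun j μ => ⟨step μ.1 μ.2 (F j).1 (F j).2, hstepK ..⟩) j
  refine ⟨fun j => (L j).1, fun j => hstep_init _ _ _ _, fun j => (L j).2, fun n E hE => ?_⟩
  refine (hF (n, hE.toFinset)).mono fun j hj => ?_
  have hpass : ∀ hn : (F j).1 ≤ Λ.d (L j).1, Λ.IsFE (Λ.r (tail (L j).1 (F j).1 hn)) (F j).2 →
      PassesThrough (L (j + 1)).1 (F j).1 (F j).2 := hstep_pass _ _ _ _
  rw [hj, Set.Finite.coe_toFinset] at hpass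
  exact hpass

end Construction

/-- If `K ⊆ Λ^0` is nonempty, every finite exhaustive set at a vertex of
`K` has an element with source in `K`, and `K` is closed under taking
ranges of paths with source in `K`, then there is a boundary path lying
entirely in `K`. -/
theorem exists_boundary_path_in_K (hFA : Λ.FinitelyAligned)
    (K : Set Λ.Obj) (hne : K.Nonempty)
    (h1 : ∀ u ∈ K, ∀ E : Set Λ.Mor, Λ.IsFE u E → ∃ α ∈ E, Λ.s α ∈ K)
    (h2 : ∀ lam : Λ.Mor, Λ.s lam ∈ K → Λ.r lam ∈ K) :
    ∃ x : Λ.InfPath, Λ.IsBoundary x ∧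
      ∀ (n : Fin k → ℕ) (hn : ∀ i, (n i : ℕ∞) ≤ x.deg i), x.vert n hn ∈ K := by
  obtain ⟨L, hL, hLK, hpass⟩ := exists_chain_passesThrough hFA h1 hne
  refine ⟨InfPath.ofChain hL, InfPath.isBoundary_ofChain hL hpass, fun n hn => ?_⟩
  obtain ⟨j, hj⟩ := exists_le_d_chain hL hn
  rw [InfPath.ofChain_vert hL hn hj]
  exact h2 _ (by rw [s_tail]; exact hLK j)

end KGraph
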